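/- Let P(m) be the natural unit interval order on [n] induced by m = (2, m_2, m_3, n, ..., n) with 2 incomparable to 3 and 3 incomparable to 4, and let G be its incomparability graph. Then there is a weight-preserving injection from the set of P(m)-tableaux of shape (3,2,1^{n-5}) into the set of P(m)-tableaux of shape (3,1^{n-3}); consequently, for every j the number of tableaux of shape (3,2,1^{n-5}) with j G-inversions is at most the number of tableaux of shape (3,1^{n-3}) with j G-inversions. -/

import Mathlib

/-- The order relation of the natural unit interval order `P(m)` on `{1, …, n}`:
`i <_P j` iff `m i < j`. -/
def ltP (m : ℕ → ℕ) (i j : ℕ) : Prop := m i < j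

/-- `u` and `v` are incomparable in `P(m)` (an edge of the incomparability graph). -/
def Incomp (m : ℕ → ℕ) (u v : ℕ) : Prop := u ≠ v ∧ ¬ ltP m u v ∧ ¬ ltP m v u

/-- `m` encodes a natural unit interval order `P(m)` on `{1, …, n}` induced by the sequence
`(2, m 2, m 3, n, …, n)`: `m 1 = 2`; `i ≤ m i ≤ n` for `1 ≤ i ≤ n`; `m` is nondecreasing on
`{1, …, n}`; and `m i = n` for `4 ≤ i ≤ n`. -/
def SeqHyp (n : ℕ) (m : ℕ → ℕ) : Prop :=
  m 1 = 2 ∧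
  (∀ i, 1 ≤ i → i ≤ n → i ≤ m i ∧ m i ≤ n) ∧
  (∀ i j, 1 ≤ i → i ≤ j → j ≤ n → m i ≤ m j) ∧
  (∀ i, 4 ≤ i → i ≤ n → m i = n)

/-- A `P(m)`-tableau of shape `sh` (a partition of `n`, given as a nonincreasing list of row
lengths): a filling of the cells `(i, j)` with `j < sh[i]` by the elements `1, …, n`, each
appearing exactly once, with rows strictly increasing in `<_P` and entries in consecutive rows
of a column pairwise non-decreasing (`¬ b <_P a` whenever `a` is immediately above `b`).
Cells outside the shape carry the junk value `0`. -/
structure PTab (n : ℕ) (m : ℕ → ℕ) (sh : List ℕ) where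
  entry : ℕ → ℕ → ℕ
  zero_outside : ∀ i j, sh.getD i 0 ≤ j → entry i j = 0
  mem_inside : ∀ i j, j < sh.getD i 0 → entry i j ∈ Finset.Icc 1 n
  inj : ∀ i j i' j', j < sh.getD i 0 → j' < sh.getD i' 0 →
    entry i j = entry i' j' → i = i' ∧ j = j'
  surj : ∀ v ∈ Finset.Icc 1 n, ∃ i j, j < sh.getD i 0 ∧ entry i j = v
  rows : ∀ i j j', j < j' → j' < sh.getD i 0 → ltP m (entry i j) (entry i j')
  cols : ∀ i j, j < sh.getD (i + 1) 0 → ¬ ltP m (entry (i + 1) j) (entry i j)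

/-- The number of `G`-inversions of a `P(m)`-tableau: pairs of cells carrying incomparable
values `u < v` with `u` in a strictly higher row than `v`. -/
noncomputable def invG {n : ℕ} {m : ℕ → ℕ} {sh : List ℕ} (T : PTab n m sh) : ℕ :=
  Nat.card {c : (ℕ × ℕ) × (ℕ × ℕ) //
    c.1.2 < sh.getD c.1.1 0 ∧ c.2.2 < sh.getD c.2.1 0 ∧
    c.1.1 < c.2.1 ∧
    T.entry c.1.1 c.1.2 < T.entry c.2.1 c.2.2 ∧
    Incomp m (T.entry c.1.1 c.1.2) (T.entry c.2.1 c.2.2)}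

/-!
In a `P(m)`-tableau of shape `(3, 2, 1^(n-5))` the first row must start with `1, 3` and the
second with `2`, because every element above `3` is maximal in `P(m)`. Hence every entry below the
second row is maximal, and moving the second entry `b` of row `1` into a new row directly below it
keeps the columns admissible. Since `2 <_P b`, separating `2` and `b` creates no `G`-inversion, and
all other pairs of rows keep their relative order.
-/

open Function Set

def cells (sh : List ℕ) : Set (ℕ × ℕ) := {c | c.2 < sh.getD c.1 0}

theorem cells_subset_prod (sh : List ℕ) : cells sh ⊆ Iio sh.length ×ˢ Iio sh.sum := by
  rintro ⟨i, j⟩ (h : j < sh.getD i 0)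
  have hi : i < sh.length := by
    by_contra! hi
    rw [List.getD_eq_default _ _ hi] at h
    omega
  rw [List.getD_eq_getElem _ _ hi] at h
  exact ⟨hi, h.trans_le (List.le_sum_of_mem (List.getElem_mem hi))⟩

theorem cells_finite (sh : List ℕ) : (cells sh).Finite :=
  ((finite_Iio _).prod (finite_Iio _)).subset (cells_subset_prod sh)

theorem mem_cells_hook {a k : ℕ} {c : ℕ × ℕ} :
    c ∈ cells (a :: List.replicate k 1) ↔
      (c.1 = 0 ∧ c.2 < a) ∨ (1 ≤ c.1 ∧ c.1 ≤ k ∧ c.2 = 0) := by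
  obtain ⟨_ | i, j⟩ := c
  · simp [cells]
  · by_cases hi : i < k <;> simp [cells, hi]

theorem mem_cells_hook_two {a k : ℕ} {c : ℕ × ℕ} :
    c ∈ cells (a :: 2 :: List.replicate k 1) ↔
      (c.1 = 0 ∧ c.2 < a) ∨ (c.1 = 1 ∧ c.2 < 2) ∨ (2 ≤ c.1 ∧ c.1 ≤ k + 1 ∧ c.2 = 0) := by
  obtain ⟨_ | _ | i, j⟩ := c
  · simp [cells]
  · simp [cells]
  · by_cases hi : i < k <;> simp [cells, hi]

/-- The cell of shape `(a, 2, 1^k)` whose entry goes to the cell `c` of shape `(a, 1^(k+2))`: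
the entry in cell `(1, 1)` starts a new row `2`, and the rows below move down by one. -/
def sourceCell (c : ℕ × ℕ) : ℕ × ℕ :=
  if c.1 ≤ 1 then c else if c.1 = 2 then (1, 1) else (c.1 - 1, c.2)

theorem sourceCell_fst_lt_sourceCell_fst {c d : ℕ × ℕ} :
    (sourceCell c).1 < (sourceCell d).1 ↔ c.1 < d.1 ∧ ¬ (c.1 = 1 ∧ d.1 = 2) := by
  unfold sourceCell
  split_ifs <;> simp_all <;> omega

theorem bijOn_sourceCell (a k : ℕ) :
    BijOn sourceCell (cells (a :: List.replicate (k + 2) 1))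
      (cells (a :: 2 :: List.replicate k 1)) := by
  refine ⟨fun c hc => ?_, fun c hc d hd h => ?_, fun c hc => ?_⟩
  · rw [mem_cells_hook] at hc
    rw [mem_cells_hook_two, sourceCell]
    split_ifs <;> simp_all <;> omega
  · obtain ⟨i, j⟩ := c
    obtain ⟨i', j'⟩ := d
    rw [mem_cells_hook] at hc hd
    simp only [sourceCell] at h hc hd
    split_ifs at h <;> simp only [Prod.mk.injEq] at h ⊢ <;> omega
  · obtain ⟨i, j⟩ := c
    rw [mem_cells_hook_two] at hc
    rcases hc with ⟨rfl, hj⟩ | ⟨rfl, hj⟩ | ⟨hi, hik, rfl⟩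
    · exact ⟨(0, j), mem_cells_hook.mpr (.inl ⟨rfl, hj⟩), rfl⟩
    · obtain rfl | rfl : j = 0 ∨ j = 1 := by omega
      · exact ⟨(1, 0), mem_cells_hook.mpr (.inr (by simp)), rfl⟩
      · exact ⟨(2, 0), mem_cells_hook.mpr (.inr (by simp)), rfl⟩
    · refine ⟨(i + 1, 0), mem_cells_hook.mpr (.inr (by simp; omega)), ?_⟩
      simp only [sourceCell]
      rw [if_neg (by omega), if_neg (by omega)]
      rfl

theorem not_ltP_of_ltP {m : ℕ → ℕ} {u v : ℕ} (hu : u ≤ m u) (hv : v ≤ m v)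
    (h : ltP m u v) : ¬ ltP m v u := by
  unfold ltP at *
  omega

namespace SeqHyp

variable {n : ℕ} {m : ℕ → ℕ}

theorem le_apply (hm : SeqHyp n m) {u : ℕ} (hu : u ∈ Finset.Icc 1 n) : u ≤ m u :=
  (hm.2.1 u (Finset.mem_Icc.mp hu).1 (Finset.mem_Icc.mp hu).2).1

/-- Everything above `3` is maximal in `P(m)`. -/
theorem le_three_of_ltP (hm : SeqHyp n m) {u v : ℕ} (hu : u ≤ n) (hv : v ≤ n)
    (h : ltP m u v) : u ≤ 3 := by
  by_contra! hu3
  have := hm.2.2.2 u hu3 hu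
  unfold ltP at h
  omega

end SeqHyp

namespace PTab

variable {n : ℕ} {m : ℕ → ℕ} {sh sh' : List ℕ} {k : ℕ}

theorem ext_of_eqOn {T T' : PTab n m sh}
    (h : ∀ c ∈ cells sh, uncurry T.entry c = uncurry T'.entry c) : T = T' := by
  suffices T.entry = T'.entry by cases T; cases T'; cases this; rfl
  funext i j
  by_cases hc : j < sh.getD i 0
  · exact h (i, j) hc
  · rw [T.zero_outside i j (by omega), T'.zero_outside i j (by omega)]

theorem entry_le (T : PTab n m sh) (i j : ℕ) : T.entry i j ≤ n := by
  by_cases hc : j < sh.getD i 0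
  · exact (Finset.mem_Icc.mp (T.mem_inside i j hc)).2
  · rw [T.zero_outside i j (by omega)]
    exact n.zero_le

instance : Finite (PTab n m sh) := by
  have := (cells_finite sh).to_subtype
  refine Finite.of_injective
    (fun T (c : cells sh) =>
      (⟨uncurry T.entry c, Nat.lt_succ_of_le (T.entry_le _ _)⟩ : Fin (n + 1)))
    fun T T' h => ext_of_eqOn fun c hc => ?_
  simpa using congrFun h ⟨c, hc⟩

def pullback (T : PTab n m sh) (sh' : List ℕ) (ρ : ℕ × ℕ → ℕ × ℕ) (i j : ℕ) : ℕ :=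
  if j < sh'.getD i 0 then uncurry T.entry (ρ (i, j)) else 0

theorem pullback_apply (T : PTab n m sh) {ρ : ℕ × ℕ → ℕ × ℕ} {i j : ℕ}
    (h : j < sh'.getD i 0) : T.pullback sh' ρ i j = uncurry T.entry (ρ (i, j)) :=
  if_pos h

theorem eq_of_pullback_eq {ρ : ℕ × ℕ → ℕ × ℕ} (hρ : SurjOn ρ (cells sh') (cells sh))
    {T T' : PTab n m sh} (h : T.pullback sh' ρ = T'.pullback sh' ρ) : T = T' := by
  refine ext_of_eqOn fun c hc => ?_
  obtain ⟨c', hc', rfl⟩ := hρ hc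
  rw [← T.pullback_apply hc', ← T'.pullback_apply hc', h]

def reshape (T : PTab n m sh) (ρ : ℕ × ℕ → ℕ × ℕ) (hρ : BijOn ρ (cells sh') (cells sh))
    (hrows : ∀ i j j', j < j' → j' < sh'.getD i 0 →
      ltP m (T.pullback sh' ρ i j) (T.pullback sh' ρ i j'))
    (hcols : ∀ i j, j < sh'.getD (i + 1) 0 →
      ¬ ltP m (T.pullback sh' ρ (i + 1) j) (T.pullback sh' ρ i j)) :
    PTab n m sh' where
  entry := T.pullback sh' ρ
  zero_outside i j h := if_neg (by omega)
  mem_inside i j h := by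
    rw [T.pullback_apply h]
    exact T.mem_inside _ _ (hρ.mapsTo h)
  inj i j i' j' h h' he := by
    rw [T.pullback_apply h, T.pullback_apply h'] at he
    have := T.inj _ _ _ _ (hρ.mapsTo h) (hρ.mapsTo h') he
    simpa using hρ.injOn h h' (Prod.ext this.1 this.2)
  surj v hv := by
    obtain ⟨i, j, hc, rfl⟩ := T.surj v hv
    obtain ⟨c, hc', hρc⟩ := hρ.surjOn (show (i, j) ∈ cells sh from hc)
    exact ⟨c.1, c.2, hc', by rw [T.pullback_apply hc', hρc]; rfl⟩
  rows := hrows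
  cols := hcols

theorem invG_reshape (T : PTab n m sh) {ρ : ℕ × ℕ → ℕ × ℕ} {hρ : BijOn ρ (cells sh') (cells sh)}
    {hrows hcols} (hρrow : ∀ c ∈ cells sh', ∀ d ∈ cells sh',
      Incomp m (uncurry T.entry (ρ c)) (uncurry T.entry (ρ d)) →
        (c.1 < d.1 ↔ (ρ c).1 < (ρ d).1)) :
    invG (T.reshape ρ hρ hrows hcols) = invG T := by
  have hentry {c} (hc : c ∈ cells sh') :
      (T.reshape ρ hρ hrows hcols).entry c.1 c.2 = uncurry T.entry (ρ c) :=
    T.pullback_apply hc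
  refine Nat.card_eq_of_bijective
    (fun p => ⟨(ρ p.1.1, ρ p.1.2), ?_⟩) ⟨?_, ?_⟩
  · obtain ⟨⟨c, d⟩, hc, hd, hcd, hlt, hinc⟩ := p
    simp only [hentry hc, hentry hd] at hlt hinc
    exact ⟨hρ.mapsTo hc, hρ.mapsTo hd, (hρrow c hc d hd hinc).mp hcd, hlt, hinc⟩
  · rintro ⟨⟨c, d⟩, hc, hd, _⟩ ⟨⟨c', d'⟩, hc', hd', _⟩ h
    simp only [Subtype.mk.injEq, Prod.mk.injEq] at h ⊢
    exact ⟨hρ.injOn hc hc' h.1, hρ.injOn hd hd' h.2⟩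
  · rintro ⟨⟨a, b⟩, ha, hb, hab, hlt, hinc⟩
    obtain ⟨c, hc, rfl⟩ := hρ.surjOn ha
    obtain ⟨d, hd, rfl⟩ := hρ.surjOn hb
    refine ⟨⟨(c, d), hc, hd, (hρrow c hc d hd hinc).mpr hab, ?_⟩, rfl⟩
    simp only [hentry hc, hentry hd]
    exact ⟨hlt, hinc⟩

theorem card_invG_le_of_injective (ψ : PTab n m sh → PTab n m sh')
    (hψ : Injective ψ) (hinvG : ∀ T, invG (ψ T) = invG T) (j : ℕ) :
    Nat.card {T : PTab n m sh // invG T = j} ≤ Nat.card {T : PTab n m sh' // invG T = j} :=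
  Nat.card_le_card_of_injective (fun T => ⟨ψ T, (hinvG T).trans T.2⟩)
    fun _ _ h => Subtype.ext (hψ (congrArg Subtype.val h))

theorem one_le_entry (T : PTab n m sh) {i j : ℕ} (h : j < sh.getD i 0) : 1 ≤ T.entry i j :=
  (Finset.mem_Icc.mp (T.mem_inside i j h)).1

theorem entry_ne (T : PTab n m sh) {i j i' j' : ℕ} (h : j < sh.getD i 0)
    (h' : j' < sh.getD i' 0) (hne : i ≠ i' ∨ j ≠ j') : T.entry i j ≠ T.entry i' j' := fun he => by
  have := T.inj _ _ _ _ h h' he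
  omega

theorem entry_corner (hm : SeqHyp n m) (h23 : 3 ≤ m 2) (T : PTab n m sh)
    (h0 : 3 ≤ sh.getD 0 0) (h1 : 2 ≤ sh.getD 1 0) :
    T.entry 0 0 = 1 ∧ T.entry 0 1 = 3 ∧ T.entry 1 0 = 2 := by
  have hxy := T.rows 0 0 1 (by omega) (by omega)
  have hab := T.rows 1 0 1 (by omega) (by omega)
  have hy : T.entry 0 1 ≤ 3 :=
    hm.le_three_of_ltP (T.entry_le 0 1) (T.entry_le 0 2) (T.rows 0 1 2 (by omega) (by omega))
  have ha : T.entry 1 0 ≤ 3 := hm.le_three_of_ltP (T.entry_le 1 0) (T.entry_le 1 1) hab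
  have hx : T.entry 0 0 = 1 := by
    have := hm.le_apply (T.mem_inside 0 0 (by omega))
    have := T.one_le_entry (i := 0) (j := 0) (by omega)
    unfold ltP at hxy
    obtain h | h : T.entry 0 0 = 1 ∨ T.entry 0 0 = 2 := by omega
    · exact h
    · rw [h] at hxy
      omega
  have hy3 : T.entry 0 1 = 3 := by
    unfold ltP at hxy
    rw [hx, hm.1] at hxy
    omega
  refine ⟨hx, hy3, ?_⟩
  have := T.entry_ne (i := 1) (j := 0) (i' := 0) (j' := 0) (by omega) (by omega) (by simp)
  have := T.entry_ne (i := 1) (j := 0) (i' := 0) (j' := 1) (by omega) (by omega) (by simp)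
  have := T.one_le_entry (i := 1) (j := 0) (by omega)
  omega

theorem not_ltP_entry_two_zero (hm : SeqHyp n m) (h23 : 3 ≤ m 2) (T : PTab n m sh)
    (h0 : 3 ≤ sh.getD 0 0) (h1 : 2 ≤ sh.getD 1 0) (h2 : 0 < sh.getD 2 0) :
    ¬ ltP m (T.entry 2 0) (T.entry 1 1) := by
  obtain ⟨hx, hy, ha⟩ := T.entry_corner hm h23 h0 h1
  have := T.entry_ne (i := 2) (j := 0) (i' := 0) (j' := 0) (by omega) (by omega) (by simp)
  have := T.entry_ne (i := 2) (j := 0) (i' := 0) (j' := 1) (by omega) (by omega) (by simp)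
  have := T.entry_ne (i := 2) (j := 0) (i' := 1) (j' := 0) (by omega) (by omega) (by simp)
  have := T.one_le_entry (i := 2) (j := 0) h2
  have := hm.2.2.2 _ (by omega) (T.entry_le 2 0)
  have := T.entry_le 1 1
  unfold ltP
  omega

theorem rows_pullback_sourceCell (T : PTab n m (3 :: 2 :: List.replicate k 1)) (i j j' : ℕ)
    (hjj' : j < j') (hj' : j' < (3 :: List.replicate (k + 2) 1).getD i 0) :
    ltP m (T.pullback (3 :: List.replicate (k + 2) 1) sourceCell i j)
      (T.pullback (3 :: List.replicate (k + 2) 1) sourceCell i j') := by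
  have hc' : (i, j') ∈ cells (3 :: List.replicate (k + 2) 1) := hj'
  obtain ⟨rfl, hj'3⟩ : i = 0 ∧ j' < 3 := by rw [mem_cells_hook] at hc'; omega
  rw [T.pullback_apply (by simp; omega), T.pullback_apply hj']
  exact T.rows 0 j j' hjj' (by simp; omega)

theorem cols_pullback_sourceCell (hm : SeqHyp n m) (h23 : 3 ≤ m 2)
    (T : PTab n m (3 :: 2 :: List.replicate k 1)) (i j : ℕ)
    (h : j < (3 :: List.replicate (k + 2) 1).getD (i + 1) 0) :
    ¬ ltP m (T.pullback (3 :: List.replicate (k + 2) 1) sourceCell (i + 1) j)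
      (T.pullback (3 :: List.replicate (k + 2) 1) sourceCell i j) := by
  have hc : (i + 1, j) ∈ cells (3 :: List.replicate (k + 2) 1) := h
  obtain ⟨hik, rfl⟩ : i ≤ k + 1 ∧ j = 0 := by rw [mem_cells_hook] at hc; omega
  have hc0 : (i, 0) ∈ cells (3 :: List.replicate (k + 2) 1) := mem_cells_hook.mpr (by omega)
  rw [T.pullback_apply h, T.pullback_apply hc0]
  match i, hik with
  | 0, _ => exact T.cols 0 0 (by simp)
  | 1, _ =>
    have hab := T.rows 1 0 1 one_pos (by simp)
    exact not_ltP_of_ltP (hm.le_apply (T.mem_inside 1 0 (by simp)))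
      (hm.le_apply (T.mem_inside 1 1 (by simp))) hab
  | 2, hik =>
    exact T.not_ltP_entry_two_zero hm h23 (by simp) (by simp)
      ((mem_cells_hook_two (c := (2, 0))).mpr (by omega))
  | i + 3, hik =>
    simp only [sourceCell]
    rw [if_neg (by omega), if_neg (by omega), if_neg (by omega), if_neg (by omega)]
    exact T.cols (i + 2) 0 ((mem_cells_hook_two (c := (i + 3, 0))).mpr (by omega))

def moveToNewRow (hm : SeqHyp n m) (h23 : 3 ≤ m 2)
    (T : PTab n m (3 :: 2 :: List.replicate k 1)) : PTab n m (3 :: List.replicate (k + 2) 1) :=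
  T.reshape sourceCell (bijOn_sourceCell 3 k) T.rows_pullback_sourceCell
    (T.cols_pullback_sourceCell hm h23)

theorem moveToNewRow_injective (hm : SeqHyp n m) (h23 : 3 ≤ m 2) :
    Injective (moveToNewRow (k := k) hm h23) := fun _ _ h =>
  eq_of_pullback_eq (bijOn_sourceCell 3 k).surjOn (congrArg entry h)

/-- Rows `1` and `2` of the new tableau both come from row `1` of the old one, but their entries
are comparable, so no `G`-inversion is created or lost. -/
theorem invG_moveToNewRow (hm : SeqHyp n m) (h23 : 3 ≤ m 2)
    (T : PTab n m (3 :: 2 :: List.replicate k 1)) : invG (moveToNewRow hm h23 T) = invG T := by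
  refine T.invG_reshape fun c hc d hd hinc => ?_
  rw [sourceCell_fst_lt_sourceCell_fst]
  refine ⟨fun hcd => ⟨hcd, ?_⟩, And.left⟩
  rintro ⟨hc1, hd2⟩
  obtain ⟨rfl, rfl⟩ : c = (1, 0) ∧ d = (2, 0) := by
    rw [mem_cells_hook] at hc hd
    exact ⟨Prod.ext hc1 (by omega), Prod.ext hd2 (by omega)⟩
  exact hinc.2.1 (T.rows 1 0 1 one_pos (by simp))

end PTab

theorem ptab_injection_32_to_3_general (n : ℕ) (m : ℕ → ℕ) (hn : 5 ≤ n) (hm : SeqHyp n m)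
    (h23 : 3 ≤ m 2) :
    (∃ ψ : PTab n m (3 :: 2 :: List.replicate (n - 5) 1) →
           PTab n m (3 :: List.replicate (n - 3) 1),
        Function.Injective ψ ∧ ∀ T, invG (ψ T) = invG T) ∧
    ∀ j : ℕ,
      Nat.card {T : PTab n m (3 :: 2 :: List.replicate (n - 5) 1) // invG T = j}
        ≤ Nat.card {T : PTab n m (3 :: List.replicate (n - 3) 1) // invG T = j} := by
  rw [show n - 3 = n - 5 + 2 by omega]
  exact ⟨⟨_, PTab.moveToNewRow_injective hm h23, PTab.invG_moveToNewRow hm h23⟩,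
    PTab.card_invG_le_of_injective _ (PTab.moveToNewRow_injective hm h23)
      (PTab.invG_moveToNewRow hm h23)⟩

/-- For the natural unit interval order `P(m)` on `{1,…,n}` induced by `(2, m₂, m₃, n, …, n)`,
with `2` incomparable to `3` and `3` incomparable to `4`, there is a weight-preserving
injection from the `P(m)`-tableaux of shape `(3,2,1^{n-5})` into those of shape
`(3,1^{n-3})`; consequently, for every `j` the number of tableaux of shape `(3,2,1^{n-5})`
with `j` `G`-inversions is at most the number of tableaux of shape `(3,1^{n-3})` with `j`
`G`-inversions. -/
theorem ptab_injection_32_to_3 (n : ℕ) (m : ℕ → ℕ) (hn : 5 ≤ n) (hm : SeqHyp n m)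
    (h23 : 3 ≤ m 2) (h34 : 4 ≤ m 3) :
    (∃ ψ : PTab n m (3 :: 2 :: List.replicate (n - 5) 1) →
           PTab n m (3 :: List.replicate (n - 3) 1),
        Function.Injective ψ ∧ ∀ T, invG (ψ T) = invG T) ∧
    ∀ j : ℕ,
      Nat.card {T : PTab n m (3 :: 2 :: List.replicate (n - 5) 1) // invG T = j}
        ≤ Nat.card {T : PTab n m (3 :: List.replicate (n - 3) 1) // invG T = j} :=
  ptab_injection_32_to_3_general n m hn hm h23
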